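/- Let A₁ = ℚ[x, y, z], A₂ = ℚ[a, b, c, d], B = ℚ[x, y], π₁ : A₁ → B the ℚ-algebra homomorphism with x ↦ x, y ↦ y, z ↦ 0, and π₂ : A₂ → B the ℚ-algebra homomorphism with a ↦ x, b ↦ 2y − x², c ↦ y, d ↦ −y(x² − 4y). Let Φ : ℚ[K₁, K₂, G₂, G₃, Q] → A₁ ×_B A₂ be the ℚ-algebra homomorphism determined by K₁ ↦ (x, a), K₂ ↦ (2y − x², b), G₂ ↦ (y, c), G₃ ↦ (z, 0), Q ↦ (−y(x² − 4y), d). Then Φ is surjective and its kernel is the ideal generated by the two polynomials G₃·(−K₂ + 2G₂ − K₁²) and G₃·(Q + G₂(K₁² − 4G₂)). -/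

import Mathlib

open MvPolynomial

namespace Stmt10

/-- `A₁ = ℚ[x, y, z]` with `x = X 0`, `y = X 1`, `z = X 2`. -/
abbrev A1 : Type := MvPolynomial (Fin 3) ℚ

/-- `A₂ = ℚ[a, b, c, d]` with `a = X 0`, `b = X 1`, `c = X 2`, `d = X 3`. -/
abbrev A2 : Type := MvPolynomial (Fin 4) ℚ

/-- `B = ℚ[x, y]` with `x = X 0`, `y = X 1`. -/
abbrev B : Type := MvPolynomial (Fin 2) ℚ

/-- `π₁ : A₁ → B`, `x ↦ x`, `y ↦ y`, `z ↦ 0`. -/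
noncomputable def π₁ : A1 →ₐ[ℚ] B := aeval ![X 0, X 1, 0]

/-- `π₂ : A₂ → B`, `a ↦ x`, `b ↦ 2y − x²`, `c ↦ y`, `d ↦ −y(x² − 4y)`. -/
noncomputable def π₂ : A2 →ₐ[ℚ] B :=
  aeval ![X 0, 2 * X 1 - X 0 ^ 2, X 1, -X 1 * (X 0 ^ 2 - 4 * X 1)]

/-- The fiber product `A₁ ×_B A₂` along `π₁` and `π₂`, as a subring of `A₁ × A₂`. -/
noncomputable def F : Subring (A1 × A2) :=
  (π₁.toRingHom.comp (RingHom.fst A1 A2)).eqLocus (π₂.toRingHom.comp (RingHom.snd A1 A2))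

/-- `Φ : ℚ[K₁, K₂, G₂, G₃, Q] → A₁ ×_B A₂` determined by `K₁ ↦ (x, a)`,
`K₂ ↦ (2y − x², b)`, `G₂ ↦ (y, c)`, `G₃ ↦ (z, 0)`, `Q ↦ (−y(x² − 4y), d)`
(with `K₁ = X 0`, `K₂ = X 1`, `G₂ = X 2`, `G₃ = X 3`, `Q = X 4`). -/
noncomputable def Φ : MvPolynomial (Fin 5) ℚ →ₐ[ℚ] A1 × A2 :=
  aeval ![(X 0, X 0), (2 * X 1 - X 0 ^ 2, X 1), (X 1, X 2), (X 2, 0),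
    (-X 1 * (X 0 ^ 2 - 4 * X 1), X 3)]

end Stmt10

/-! `Φ = (Φ₁, Φ₂)`, where `Φ₂` kills `G₃` and `Φ₁` is the substitution `K₂ ↦ 2G₂ − K₁²`,
`Q ↦ −G₂(K₁² − 4G₂)` followed by a renaming of variables. Both have sections, and a substitution
`φ` with section `ι` has kernel inside any ideal containing every `X i − ι (φ (X i))`; hence
`ker Φ₂ = (G₃)` and `ker Φ₁` is generated by the two relations `K₂ − (2G₂ − K₁²)` and
`Q + G₂(K₁² − 4G₂)`. As `Φ₁ G₃ = z` is a nonzerodivisor, `ker Φ = (G₃) · ker Φ₁`.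
For surjectivity, write `u = ι (π₁ u) + z h` for `(u, v)` in the fiber product; then
`ι₂ v + G₃ · ι₁ h` is a preimage. -/

namespace MvPolynomial

variable {R σ : Type*} [CommRing R]

theorem sub_mem_of_forall_X_sub_mem {ρ : MvPolynomial σ R →ₐ[R] MvPolynomial σ R}
    {I : Ideal (MvPolynomial σ R)} (h : ∀ i, X i - ρ (X i) ∈ I) (p : MvPolynomial σ R) :
    p - ρ p ∈ I := by
  have : (Ideal.Quotient.mkₐ R I).comp ρ = Ideal.Quotient.mkₐ R I :=
    algHom_ext fun i ↦ by simpa using ((Ideal.Quotient.mk_eq_mk_iff_sub_mem _ _).mpr (h i)).symm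
  exact (Ideal.Quotient.mk_eq_mk_iff_sub_mem _ _).mp (DFunLike.congr_fun this p).symm

theorem ker_le_of_forall_X_sub_mem {A : Type*} [CommRing A] [Algebra R A]
    {φ : MvPolynomial σ R →ₐ[R] A} (ι : A →ₐ[R] MvPolynomial σ R)
    {I : Ideal (MvPolynomial σ R)} (h : ∀ i, X i - ι (φ (X i)) ∈ I) :
    RingHom.ker φ ≤ I := fun p hp ↦ by
  simpa [RingHom.mem_ker.mp hp] using sub_mem_of_forall_X_sub_mem (ρ := ι.comp φ) h p

end MvPolynomial

namespace Stmt10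

local notation "P₅" => MvPolynomial (Fin 5) ℚ

noncomputable def Φ₁ : P₅ →ₐ[ℚ] A1 :=
  aeval ![X 0, 2 * X 1 - X 0 ^ 2, X 1, X 2, -X 1 * (X 0 ^ 2 - 4 * X 1)]

noncomputable def Φ₂ : P₅ →ₐ[ℚ] A2 := aeval ![X 0, X 1, X 2, 0, X 3]

noncomputable def ι₁ : A1 →ₐ[ℚ] P₅ := aeval ![X 0, X 2, X 3]

noncomputable def ι₂ : A2 →ₐ[ℚ] P₅ := aeval ![X 0, X 1, X 2, X 4]

noncomputable def ι : B →ₐ[ℚ] A1 := aeval ![X 0, X 1]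

noncomputable def relations : Ideal P₅ :=
  Ideal.span {-X 1 + 2 * X 2 - X 0 ^ 2, X 4 + X 2 * (X 0 ^ 2 - 4 * X 2)}

theorem Φ_eq_prod : Φ = Φ₁.prod Φ₂ :=
  algHom_ext fun i ↦ by fin_cases i <;> simp [Φ, Φ₁, Φ₂]

theorem Φ_apply (p : P₅) : Φ p = (Φ₁ p, Φ₂ p) := by
  rw [Φ_eq_prod, AlgHom.prod_apply]

theorem Φ₁_X_three : Φ₁ (X 3) = X 2 := by simp [Φ₁]

theorem Φ₂_X_three : Φ₂ (X 3) = 0 := by simp [Φ₂]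

theorem π₁_comp_Φ₁ : π₁.comp Φ₁ = π₂.comp Φ₂ :=
  algHom_ext fun i ↦ by fin_cases i <;> simp [π₁, π₂, Φ₁, Φ₂, map_ofNat]

theorem Φ₁_comp_ι₁ : Φ₁.comp ι₁ = AlgHom.id ℚ A1 :=
  algHom_ext fun i ↦ by fin_cases i <;> simp [Φ₁, ι₁]

theorem Φ₂_comp_ι₂ : Φ₂.comp ι₂ = AlgHom.id ℚ A2 :=
  algHom_ext fun i ↦ by fin_cases i <;> simp [Φ₂, ι₂]

theorem Φ₁_comp_ι₂ : Φ₁.comp ι₂ = ι.comp π₂ :=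
  algHom_ext fun i ↦ by fin_cases i <;> simp [Φ₁, ι₂, ι, π₂, map_ofNat]

theorem sub_ι_π₁_mem (u : A1) : u - ι (π₁ u) ∈ Ideal.span {X 2} :=
  sub_mem_of_forall_X_sub_mem (ρ := ι.comp π₁) (fun i ↦ by fin_cases i <;> simp [ι, π₁]) u

theorem ker_Φ₂_le : RingHom.ker Φ₂ ≤ Ideal.span {X 3} :=
  ker_le_of_forall_X_sub_mem ι₂ fun i ↦ by fin_cases i <;> simp [ι₂, Φ₂]

theorem ker_Φ₁_le : RingHom.ker Φ₁ ≤ relations :=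
  ker_le_of_forall_X_sub_mem ι₁ fun i ↦ by
    fin_cases i
    · simp [ι₁, Φ₁]
    · exact Ideal.mem_span_pair.mpr ⟨-1, 0, by simp [ι₁, Φ₁, map_ofNat]; ring⟩
    · simp [ι₁, Φ₁]
    · simp [ι₁, Φ₁]
    · exact Ideal.mem_span_pair.mpr ⟨0, 1, by simp [ι₁, Φ₁, map_ofNat]⟩

theorem ker_Φ₁ : RingHom.ker Φ₁ = relations := by
  refine le_antisymm ker_Φ₁_le ?_
  rw [relations, Ideal.span_le]
  rintro g (rfl | rfl) <;> simp [Φ₁, map_ofNat]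

theorem range_Φ : Φ.toRingHom.range = F := by
  refine le_antisymm ?_ ?_
  · rintro _ ⟨p, rfl⟩
    show π₁ (Φ p).1 = π₂ (Φ p).2
    simpa [Φ_apply] using AlgHom.congr_fun π₁_comp_Φ₁ p
  rintro ⟨u, v⟩ (huv : π₁ u = π₂ v)
  obtain ⟨h, hh⟩ := Ideal.mem_span_singleton'.mp (sub_ι_π₁_mem u)
  refine ⟨ι₂ v + X 3 * ι₁ h, (Φ_apply _).trans (congrArg₂ Prod.mk ?_ ?_)⟩
  · have hv : Φ₁ (ι₂ v) = ι (π₁ u) := huv ▸ AlgHom.congr_fun Φ₁_comp_ι₂ v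
    have hh' : Φ₁ (ι₁ h) = h := AlgHom.congr_fun Φ₁_comp_ι₁ h
    rw [map_add, map_mul, hv, hh', Φ₁_X_three]
    linear_combination hh
  · have hv : Φ₂ (ι₂ v) = v := AlgHom.congr_fun Φ₂_comp_ι₂ v
    rw [map_add, map_mul, hv, Φ₂_X_three, zero_mul, add_zero]

theorem ker_Φ : RingHom.ker Φ = Ideal.span {X 3} * relations := by
  refine le_antisymm (fun r hr ↦ ?_) (Ideal.mul_le.mpr fun g hg s hs ↦ ?_)
  · obtain ⟨hr₁, hr₂⟩ : Φ₁ r = 0 ∧ Φ₂ r = 0 := by simpa [Φ_apply] using hr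
    obtain ⟨s, rfl⟩ := Ideal.mem_span_singleton'.mp (ker_Φ₂_le hr₂)
    rw [map_mul, Φ₁_X_three] at hr₁
    have hs : Φ₁ s = 0 := (mul_eq_zero.mp hr₁).resolve_right (X_ne_zero _)
    exact Ideal.mem_span_singleton_mul.mpr ⟨s, ker_Φ₁ ▸ hs, mul_comm _ _⟩
  · obtain ⟨g, rfl⟩ := Ideal.mem_span_singleton'.mp hg
    have hs : Φ₁ s = 0 := (ker_Φ₁ ▸ hs : s ∈ RingHom.ker Φ₁)
    simp [Φ_apply, hs, Φ₂_X_three]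

/-- `Φ` is surjective onto the fiber product `A₁ ×_B A₂` and its kernel is the ideal
generated by `G₃(−K₂ + 2G₂ − K₁²)` and `G₃(Q + G₂(K₁² − 4G₂))`. -/
theorem stmt10 :
    Φ.toRingHom.range = F ∧
    RingHom.ker Φ =
      Ideal.span
        ({X 3 * (-X 1 + 2 * X 2 - X 0 ^ 2),
          X 3 * (X 4 + X 2 * (X 0 ^ 2 - 4 * X 2))} :
          Set (MvPolynomial (Fin 5) ℚ)) := by
  refine ⟨range_Φ, ?_⟩
  rw [ker_Φ, relations, Ideal.span_mul_span', Set.singleton_mul, Set.image_pair]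

end Stmt10
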